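/- Let G = K_{n1,...,nk} be a complete k-partite graph with k ≥ 3 and n1 ≤ ... ≤ nk, and set s = n1 + ... + n_{k-1}, t = nk. If s ≤ t, then rc(G) = min{⌈t^{1/s}⌉, 3}. -/

import Mathlib

/-!
Let `T` be the last part, `t = |T|`, and `S` the `s` vertices outside it. Under a 2-colouring a
rainbow path between two vertices of `T` has length two through `S`, so the colour patterns
`S → Bool` of the vertices of `T` must be pairwise distinct, forcing `t ≤ 2 ^ s`. Conversely, if
`s ≤ t ≤ 2 ^ s`, give the vertices of `T` distinct patterns including the `s` unit vectors: distinct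
patterns join two vertices of `T`, and the unit vector of `u` joins `u` to any other vertex of its
part. One colour fails as `t ≥ 2`, and three colours always suffice once there are three parts.
-/

open SimpleGraph

/-- A graph `G` is rainbow connected under edge-coloring `c` if any two vertices are
joined by a path whose edges receive pairwise distinct colors. -/
def RainbowConnected {V : Type*} (G : SimpleGraph V) (c : Sym2 V → ℕ) : Prop :=
  ∀ u v : V, ∃ p : G.Walk u v, p.IsPath ∧ (p.edges.map c).Nodup

/-- The rainbow connection number: the least number of colors in an edge-coloring
making `G` rainbow connected. -/
noncomputable def rc {V : Type*} [Fintype V] (G : SimpleGraph V) : ℕ :=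
  sInf {n | ∃ c : Sym2 V → ℕ, (∀ e ∈ G.edgeSet, c e < n) ∧ RainbowConnected G c}

/-- Least `n` with `n ^ s ≥ t`, i.e. `⌈t^(1/s)⌉`. -/
noncomputable def ceilRoot (s t : ℕ) : ℕ := sInf {n | t ≤ n ^ s}

open Finset Fintype

section General

variable {V : Type*} {G : SimpleGraph V} {c : Sym2 V → ℕ}

def RainbowColorable (G : SimpleGraph V) (m : ℕ) : Prop :=
  ∃ c : Sym2 V → ℕ, (∀ e ∈ G.edgeSet, c e < m) ∧ RainbowConnected G c

lemma RainbowColorable.mono {m m' : ℕ} (h : RainbowColorable G m) (hm : m ≤ m') :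
    RainbowColorable G m' :=
  let ⟨c, hc, hrc⟩ := h
  ⟨c, fun e he => (hc e he).trans_le hm, hrc⟩

lemma rc_eq_succ_iff [Fintype V] {m : ℕ} :
    rc G = m + 1 ↔ RainbowColorable G (m + 1) ∧ ¬ RainbowColorable G m :=
  Nat.sInf_upward_closed_eq_succ_iff (fun _ _ hm h => RainbowColorable.mono h hm) m

lemma rainbowConnected_of_walks (h : ∀ u v, ∃ p : G.Walk u v, (p.edges.map c).Nodup) :
    RainbowConnected G c := by
  classical
  intro u v
  obtain ⟨p, hp⟩ := h u v
  exact ⟨p.bypass, p.bypass_isPath, (p.edges_bypass_sublist_edges.map c).nodup hp⟩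

lemma exists_rainbow_two_path_of_lt_two {u v : V} (p : G.Walk u v) (huv : u ≠ v)
    (hadj : ¬ G.Adj u v) (hc : ∀ e ∈ G.edgeSet, c e < 2) (hp : (p.edges.map c).Nodup) :
    ∃ w, G.Adj u w ∧ G.Adj w v ∧ c s(u, w) ≠ c s(w, v) := by
  rcases p with _ | ⟨h₁, _ | ⟨h₂, _ | ⟨h₃, p⟩⟩⟩
  · exact absurd rfl huv
  · exact absurd h₁ hadj
  · exact ⟨_, h₁, h₂, by simpa using hp⟩
  · have := hc s(_, _) h₁
    have := hc s(_, _) h₂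
    have := hc s(_, _) h₃
    simp only [Walk.edges_cons, List.map_cons, List.nodup_cons, List.mem_cons] at hp
    omega

lemma not_rainbowColorable_one {u v : V} (huv : u ≠ v) (hadj : ¬ G.Adj u v) :
    ¬ RainbowColorable G 1 := by
  rintro ⟨c, hc, hrc⟩
  obtain ⟨p, -, hp⟩ := hrc u v
  obtain ⟨w, hw₁, hw₂, hne⟩ := exists_rainbow_two_path_of_lt_two p huv hadj
    (fun e he => (hc e he).trans one_lt_two) hp
  have := hc s(_, _) hw₁
  have := hc s(_, _) hw₂
  omega

end General

lemma exists_injective_separating {α β : Type*} [Fintype α] [Fintype β]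
    (h₁ : card α ≤ card β) (h₂ : card β ≤ 2 ^ card α) :
    ∃ f : β → α → Bool, Function.Injective f ∧ ∀ a a', a ≠ a' → ∃ b, f b a ≠ f b a' := by
  classical
  let δ : α → α → Bool := fun a a' => decide (a' = a)
  have hδ : Function.Injective δ := fun a a' h => by simpa [δ] using congrFun h a
  obtain ⟨B, hδB, -, hB⟩ := exists_subsuperset_card_eq (n := card β) (subset_univ (univ.image δ))
    (by rwa [card_image_of_injective _ hδ, card_univ]) (by simpa using h₂)
  let e : β ≃ B := equivOfCardEq (by simp [hB])
  refine ⟨fun b => e b, fun b b' h => e.injective (Subtype.ext h), fun a a' haa' => ?_⟩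
  exact ⟨e.symm ⟨δ a, hδB (mem_image_of_mem _ (mem_univ a))⟩, by simp [δ, Ne.symm haa']⟩

namespace SimpleGraph.completeMultipartiteGraph

/-- Colour the edge between parts `i` and `j` by `i + j mod 3`: two vertices of part `p` are
joined through parts `p + 1` and `p + 2 (mod 3)` by edges of colours `2p + 1`, `2p`, `2p + 2`. -/
lemma rainbowColorable_three {k : ℕ} {V : Fin k → Type*} (hk : 3 ≤ k) (hV : ∀ i, Nonempty (V i)) :
    RainbowColorable (completeMultipartiteGraph V) 3 := by
  refine ⟨Sym2.lift ⟨fun x y => (x.1.val + y.1.val) % 3, fun x y => by dsimp only; rw [add_comm]⟩,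
    fun e _ => ?_, rainbowConnected_of_walks fun u v => ?_⟩
  · induction e using Sym2.ind
    exact Nat.mod_lt _ three_pos
  by_cases hadj : (completeMultipartiteGraph V).Adj u v
  · exact ⟨.cons hadj .nil, by simp⟩
  have huv : u.1 = v.1 := by simpa using hadj
  let a : Σ i, V i := ⟨⟨(u.1 + 1) % 3, by omega⟩, Classical.arbitrary _⟩
  let b : Σ i, V i := ⟨⟨(u.1 + 2) % 3, by omega⟩, Classical.arbitrary _⟩
  have h₁ : (completeMultipartiteGraph V).Adj u a := Fin.ne_of_val_ne (by dsimp [a]; omega)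
  have h₂ : (completeMultipartiteGraph V).Adj a b := Fin.ne_of_val_ne (by dsimp [a, b]; omega)
  have h₃ : (completeMultipartiteGraph V).Adj b v :=
    Fin.ne_of_val_ne (by dsimp [b]; rw [← huv]; omega)
  refine ⟨.cons h₁ (.cons h₂ (.cons h₃ .nil)), ?_⟩
  simp only [Walk.edges_cons, Walk.edges_nil, List.map_cons, List.map_nil, Sym2.lift_mk,
    List.nodup_cons, List.mem_cons, List.not_mem_nil, List.nodup_nil, or_false, not_or,
    not_false_eq_true, and_true, a, b, ← huv]
  omega

variable {ι : Type*} {V : ι → Type*}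

lemma not_rainbowColorable_one {L : ι} (a b : V L) (hab : a ≠ b) :
    ¬ RainbowColorable (completeMultipartiteGraph V) 1 :=
  _root_.not_rainbowColorable_one (u := ⟨L, a⟩) (v := ⟨L, b⟩) (by simpa using hab) (by simp)

variable [Fintype ι] [DecidableEq ι] [∀ i, Fintype (V i)]

lemma card_subtype_fst_ne (L : ι) :
    card {x : Σ i, V i // x.1 ≠ L} = ∑ i ∈ univ.erase L, card (V i) := by
  have h := add_sum_erase univ (fun i => card (V i)) (mem_univ L)
  rw [card_subtype_compl, card_congr (Equiv.sigmaSubtype L), Fintype.card_sigma, ← h]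
  omega

lemma rainbowColorable_two (L : ι) (h₁ : card {x : Σ i, V i // x.1 ≠ L} ≤ card (V L))
    (h₂ : card (V L) ≤ 2 ^ card {x : Σ i, V i // x.1 ≠ L}) :
    RainbowColorable (completeMultipartiteGraph V) 2 := by
  classical
  obtain ⟨f, hf, hsep⟩ := exists_injective_separating h₁ h₂
  let E : Set (Sym2 (Σ i, V i)) := {e | ∃ j w, f j w ∧ e = s(⟨L, j⟩, w.1)}
  have hE : ∀ j (w : Σ i, V i) (hw : w.1 ≠ L), s(⟨L, j⟩, w) ∈ E ↔ f j ⟨w, hw⟩ := by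
    refine fun j w hw => ⟨?_, fun h => ⟨j, ⟨w, hw⟩, h, rfl⟩⟩
    rintro ⟨j', w', h, he⟩
    rcases Sym2.eq_iff.1 he with ⟨hj, rfl⟩ | ⟨hj, -⟩
    · rwa [sigma_mk_injective hj]
    · exact (w'.2 (congrArg Sigma.fst hj).symm).elim
  refine ⟨fun e => if e ∈ E then 1 else 0, fun e _ => by dsimp only; split_ifs <;> norm_num,
    rainbowConnected_of_walks fun u v => ?_⟩
  rcases eq_or_ne u v with rfl | huv
  · exact ⟨.nil, by simp⟩
  by_cases hadj : (completeMultipartiteGraph V).Adj u v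
  · exact ⟨.cons hadj .nil, by simp⟩
  obtain ⟨i, a⟩ := u
  obtain ⟨i', b⟩ := v
  obtain rfl : i = i' := by simpa using hadj
  have hab : a ≠ b := fun h => huv (h ▸ rfl)
  by_cases hi : i = L
  · subst hi
    obtain ⟨⟨w, hw⟩, hne⟩ : ∃ w, f a w ≠ f b w := Function.ne_iff.1 (hf.ne hab)
    have h₁ : (completeMultipartiteGraph V).Adj ⟨i, a⟩ w := Ne.symm hw
    have h₂ : (completeMultipartiteGraph V).Adj w ⟨i, b⟩ := hw
    refine ⟨.cons h₁ (.cons h₂ .nil), ?_⟩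
    revert hne
    simp only [Walk.edges_cons, Walk.edges_nil, List.map_cons, List.map_nil,
      Sym2.eq_swap (a := w), hE _ _ hw, List.nodup_cons]
    cases f a ⟨w, hw⟩ <;> cases f b ⟨w, hw⟩ <;> simp
  · obtain ⟨j, hne⟩ := hsep ⟨⟨i, a⟩, hi⟩ ⟨⟨i, b⟩, hi⟩ (by simpa using hab)
    have h₁ : (completeMultipartiteGraph V).Adj ⟨i, a⟩ ⟨L, j⟩ := hi
    have h₂ : (completeMultipartiteGraph V).Adj ⟨L, j⟩ ⟨i, b⟩ := Ne.symm hi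
    refine ⟨.cons h₁ (.cons h₂ .nil), ?_⟩
    revert hne
    simp only [Walk.edges_cons, Walk.edges_nil, List.map_cons, List.map_nil,
      Sym2.eq_swap (b := (⟨L, j⟩ : Σ i, V i)), hE j ⟨i, a⟩ hi, hE j ⟨i, b⟩ hi,
      List.nodup_cons]
    cases f j ⟨⟨i, a⟩, hi⟩ <;> cases f j ⟨⟨i, b⟩, hi⟩ <;> simp

lemma not_rainbowColorable_two (L : ι) (h : 2 ^ card {x : Σ i, V i // x.1 ≠ L} < card (V L)) :
    ¬ RainbowColorable (completeMultipartiteGraph V) 2 := by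
  classical
  rintro ⟨c, hc, hrc⟩
  let φ : V L → {x : Σ i, V i // x.1 ≠ L} → Bool := fun j w => decide (c s(⟨L, j⟩, w.1) = 0)
  obtain ⟨a, b, hab, hφ⟩ := exists_ne_map_eq_of_card_lt φ (by rwa [card_fun, card_bool])
  obtain ⟨p, -, hp⟩ := hrc ⟨L, a⟩ ⟨L, b⟩
  obtain ⟨w, h₁, h₂, hne⟩ := exists_rainbow_two_path_of_lt_two p (by simpa using hab) (by simp) hc hp
  have hpattern := congrFun hφ ⟨w, Ne.symm h₁⟩
  have := hc s(_, _) h₁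
  have := hc s(_, _) h₂
  simp only [φ, decide_eq_decide] at hpattern
  rw [Sym2.eq_swap (a := w)] at hne this
  omega

end SimpleGraph.completeMultipartiteGraph

lemma ceilRoot_eq_succ_iff {s t m : ℕ} : ceilRoot s t = m + 1 ↔ t ≤ (m + 1) ^ s ∧ ¬ t ≤ m ^ s :=
  Nat.sInf_upward_closed_eq_succ_iff
    (fun _ _ hm h => h.trans (Nat.pow_le_pow_left hm s)) m

lemma lt_ceilRoot {s t m : ℕ} (hs : s ≠ 0) (h : m ^ s < t) : m < ceilRoot s t := by
  have hmem : ceilRoot s t ∈ {n | t ≤ n ^ s} := Nat.sInf_mem ⟨t, Nat.le_self_pow hs t⟩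
  by_contra! hle
  exact (hmem.trans (Nat.pow_le_pow_left hle s)).not_gt h

/-- complete k-partite graph, k ≥ 3, s ≤ t implies rc = min(⌈t^{1/s}⌉, 3). -/
theorem rc_completeMultipartiteGraph_of_le (k : ℕ) (hk : 3 ≤ k) (n : Fin k → ℕ)
    (hpos : ∀ i, 1 ≤ n i)
    (hst : ∑ i ∈ Finset.univ.erase (⟨k - 1, by omega⟩ : Fin k), n i ≤ n ⟨k - 1, by omega⟩) :
    rc (completeMultipartiteGraph (fun i => Fin (n i))) =
      min (ceilRoot (∑ i ∈ Finset.univ.erase (⟨k - 1, by omega⟩ : Fin k), n i)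
            (n ⟨k - 1, by omega⟩)) 3 := by
  set L : Fin k := ⟨k - 1, by omega⟩
  set s := ∑ i ∈ univ.erase L, n i
  have hS : card {x : Σ i, Fin (n i) // x.1 ≠ L} = s := by
    simp only [completeMultipartiteGraph.card_subtype_fst_ne, Fintype.card_fin, s]
  have hs : 2 ≤ s := calc
    2 ≤ k - 1 := by omega
    _ = ∑ i ∈ univ.erase L, 1 := by simp [card_erase_of_mem]
    _ ≤ s := sum_le_sum fun i _ => hpos i
  rcases le_or_gt (n L) (2 ^ s) with h | h
  · have h₂ := completeMultipartiteGraph.rainbowColorable_two (V := fun i => Fin (n i)) L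
      (by simpa [hS]) (by simpa [hS])
    have h₁ := completeMultipartiteGraph.not_rainbowColorable_one (V := fun i => Fin (n i))
      (L := L) ⟨0, by omega⟩ ⟨1, by omega⟩ (by simp)
    rw [(ceilRoot_eq_succ_iff (m := 1)).2 ⟨h, by rw [one_pow]; omega⟩, rc_eq_succ_iff.2 ⟨h₂, h₁⟩]
    rfl
  · have h₃ := completeMultipartiteGraph.rainbowColorable_three (V := fun i => Fin (n i)) hk
      fun i => ⟨⟨0, hpos i⟩⟩
    have h₂ := completeMultipartiteGraph.not_rainbowColorable_two (V := fun i => Fin (n i)) L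
      (by simpa [hS])
    rw [min_eq_right (lt_ceilRoot (by omega) (by simpa using h)), rc_eq_succ_iff.2 ⟨h₃, h₂⟩]
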